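/- Let R be a commutative ring, and let p(t) = (t − x₀)^n · r(t) ∈ R[t] with r(x₀) a unit of R. Then in R[t]/(p(t)) localized so that r(t) is invertible (i.e. in the henselian/complete local situation at t = x₀), the ideal (p(t)) agrees with ((t−x₀)^n), and the straight-line family s·r(t)(t−x₀)^n + (1−s)·r(x₀)(t−x₀)^n has, in a Zariski neighborhood of {x₀} × A^1_s in A^1_t × A^1_s avoiding the other zeros, vanishing locus equal to {x₀} × A^1_s. -/
import Mathlib


open Polynomial

/-- The algebraic content of Lemma 4.9(2).  Let `p(t) = (t − x₀)^n·r(t)` with `r(x₀)` a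
unit.  (a) After localizing `R[t]` so that `r` becomes invertible, the ideal `(p)` agrees
with `((t − x₀)^n)`.  (b) Identifying `R[s,t]` with `(R[s])[t]`, the straight-line family
`h(s,t) = s·r(t)·(t−x₀)^n + (1−s)·r(x₀)·(t−x₀)^n` factors as `(t − x₀)^n·g(s,t)` where the
cofactor `g` evaluated at `t = x₀` is the unit `r(x₀)` of `R[s]`; hence near `{x₀} × 𝔸¹_s`
the vanishing locus of `h` is exactly `{x₀} × 𝔸¹_s`. -/
theorem framing_unit_factorization {R : Type*} [CommRing R] (x0 : R) (n : ℕ)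
    (r : Polynomial R) (hr : IsUnit (r.eval x0)) :
    Ideal.span {algebraMap (Polynomial R) (Localization.Away r)
        ((Polynomial.X - Polynomial.C x0) ^ n * r)} =
      Ideal.span {algebraMap (Polynomial R) (Localization.Away r)
        ((Polynomial.X - Polynomial.C x0) ^ n)} ∧
    (let g : Polynomial (Polynomial R) :=
        Polynomial.C (Polynomial.X : Polynomial R) * r.map Polynomial.C +
          Polynomial.C (1 - (Polynomial.X : Polynomial R)) *
            Polynomial.C (Polynomial.C (r.eval x0))
     (Polynomial.C (Polynomial.X : Polynomial R) *
          (r.map Polynomial.C * (Polynomial.X - Polynomial.C (Polynomial.C x0)) ^ n) +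
        Polynomial.C (1 - (Polynomial.X : Polynomial R)) *
          (Polynomial.C (Polynomial.C (r.eval x0)) *
            (Polynomial.X - Polynomial.C (Polynomial.C x0)) ^ n)) =
        (Polynomial.X - Polynomial.C (Polynomial.C x0)) ^ n * g ∧
      g.eval (Polynomial.C x0) = Polynomial.C (r.eval x0) ∧
      IsUnit (g.eval (Polynomial.C x0))) := by
  constructor
  · have hu : IsUnit (algebraMap (Polynomial R) (Localization.Away r) r) :=
      IsLocalization.Away.algebraMap_isUnit r
    rw [map_mul]
    exact Ideal.span_singleton_mul_right_unit hu _
  · refine ⟨by ring, ?_, ?_⟩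
    · have : ((r.map (Polynomial.C : R →+* Polynomial R)).eval
          (Polynomial.C x0 : Polynomial R)) = Polynomial.C (r.eval x0) := by
        rw [Polynomial.eval_map, Polynomial.eval₂_at_apply]
      simp [this]
      ring
    · have : ((r.map (Polynomial.C : R →+* Polynomial R)).eval
          (Polynomial.C x0 : Polynomial R)) = Polynomial.C (r.eval x0) := by
        rw [Polynomial.eval_map, Polynomial.eval₂_at_apply]
      simp [this]
      ring_nf
      exact hr.map (Polynomial.C : R →+* Polynomial R)
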